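/- arXiv:2301.10011 — 5 statements merged into one kernel-verified Lean document; each statement's English description precedes it below -/
import Mathlib

section
/- Let X be a finite type with decidable equality. Consider the set of pairs (R, s), where R is an equivalence relation (Setoid) on X and s is a permutation of X, satisfying (i) R x (s x) for every x : X, and (ii) for all x, y : X with R x y there exists k : ℕ with (s ^ k) x = y. Then the map sending such a pair (R, s) to the permutation s is a bijection onto the group of all permutations of X. -/
private lemma aux_char {X : Type*} (R : Setoid X) (s : Equiv.Perm X)
    (h1 : ∀ x : X, R.r x (s x)) (h2 : ∀ x y : X, R.r x y → ∃ k : ℕ, (s ^ k) x = y)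
    (x y : X) : R.r x y ↔ ∃ k : ℕ, (s ^ k) x = y := by
  constructor
  · exact h2 x y
  · rintro ⟨k, rfl⟩
    induction k with
    | zero => exact R.refl x
    | succ n ih =>
      have := h1 ((s ^ n) x)
      rw [pow_succ', Equiv.Perm.mul_apply]
      exact R.trans ih (h1 ((s ^ n) x))

/-- Permutations of a finite set correspond uniquely to cycle decompositions:
the map sending a pair `(R, s)` of an equivalence relation `R` and a permutation `s`
such that `R x (s x)` always holds and such that `R x y` implies that `y` is an
iterate of `s` applied to `x`, to the permutation `s`, is a bijection. -/
theorem stmt_0 (X : Type*) [Fintype X] [DecidableEq X] :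
    Function.Bijective
      (fun p : {p : Setoid X × Equiv.Perm X //
          (∀ x : X, p.1.r x (p.2 x)) ∧
          (∀ x y : X, p.1.r x y → ∃ k : ℕ, (p.2 ^ k) x = y)} => p.val.2) := by
  constructor
  · rintro ⟨⟨R, s⟩, h1, h2⟩ ⟨⟨R', s'⟩, h1', h2'⟩ h
    simp only at h
    subst h
    have : R = R' := by
      ext x y
      exact (aux_char R s h1 h2 x y).trans (aux_char R' s h1' h2' x y).symm
    subst this
    rfl
  · intro s
    refine ⟨⟨⟨⟨s.SameCycle, ⟨Equiv.Perm.SameCycle.refl s, fun h => h.symm,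
      fun h h' => h.trans h'⟩⟩, s⟩, ?_, ?_⟩, rfl⟩
    · intro x
      exact ⟨1, by simp⟩
    · intro x y h
      exact h.exists_pow_eq'.imp fun k hk => hk.2
end

section
/- Let n ≥ 1 be a natural number, let X be a finite type with Fintype.card X = n, and let f : X → X. Then there exists an equivalence e : ZMod n ≃ X satisfying f (e k) = e (k + 1) for all k : ZMod n, if and only if for all x, y : X there exists a natural number k with f^[k] x = y. -/
/-- For a map `f` on an `n`-element type `X` (with `n ≥ 1`), `(X, f)` admits a cyclic
structure, i.e. is isomorphic to `(ZMod n, succ)`, if and only if every element of `X`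
can be reached from every element by iterating `f`. -/
theorem stmt_1 (n : ℕ) (hn : 1 ≤ n) (X : Type*) [Fintype X] [DecidableEq X]
    (hX : Fintype.card X = n) (f : X → X) :
    (∃ e : ZMod n ≃ X, ∀ k : ZMod n, f (e k) = e (k + 1)) ↔
      ∀ x y : X, ∃ k : ℕ, f^[k] x = y := by
  haveI : NeZero n := ⟨by omega⟩
  constructor
  · rintro ⟨e, he⟩ x y
    have key : ∀ (k : ℕ) (j : ZMod n), f^[k] (e j) = e (j + k) := by
      intro k
      induction k with
      | zero => simp
      | succ m ih =>
        intro j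
        rw [Function.iterate_succ_apply, he j, ih (j + 1)]
        push_cast
        ring_nf
    refine ⟨((e.symm y) - (e.symm x)).val, ?_⟩
    have := key ((e.symm y) - (e.symm x)).val (e.symm x)
    rw [e.apply_symm_apply] at this
    rw [this, ZMod.natCast_val, ZMod.cast_id]
    simp
  · intro h
    -- f is surjective, hence injective
    have hsurj : Function.Surjective f := by
      intro y
      obtain ⟨k, hk⟩ := h (f y) y
      exact ⟨f^[k] y, by rwa [← Function.iterate_succ_apply, Function.iterate_succ_apply'] at hk⟩
    have hinj : Function.Injective f := Finite.injective_iff_surjective.mpr hsurj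
    -- basepoint
    have hne : Nonempty X := Fintype.card_pos_iff.mp (by omega)
    obtain ⟨x₀⟩ := hne
    -- find a period m with 1 ≤ m ≤ n
    obtain ⟨a, b, hab, heq⟩ :
        ∃ a b : Fin (n + 1), a ≠ b ∧ f^[(a : ℕ)] x₀ = f^[(b : ℕ)] x₀ := by
      apply Fintype.exists_ne_map_eq_of_card_lt (fun i : Fin (n+1) => f^[(i : ℕ)] x₀)
      simp [hX]
    have hne' : (a : ℕ) ≠ (b : ℕ) := fun hc => hab (Fin.ext hc)
    wlog hlt : (a : ℕ) < (b : ℕ) generalizing a b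
    · exact this b a hab.symm heq.symm hne'.symm (by omega)
    have hper : ∃ m : ℕ, 1 ≤ m ∧ m ≤ n ∧ f^[m] x₀ = x₀ := by
      refine ⟨(b : ℕ) - (a : ℕ), by omega, by omega, ?_⟩
      have : f^[(a : ℕ)] (f^[(b : ℕ) - (a : ℕ)] x₀) = f^[(a : ℕ)] x₀ := by
        rw [← Function.iterate_add_apply]
        rw [show (a : ℕ) + ((b : ℕ) - (a : ℕ)) = (b : ℕ) by omega]
        exact heq.symm
      exact (Function.Injective.iterate hinj (a : ℕ)) this
    obtain ⟨m, hm1, hmn, hmx⟩ := hper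
    -- periodicity with period m
    have hmod : ∀ k : ℕ, f^[k] x₀ = f^[k % m] x₀ := by
      intro k
      conv_lhs => rw [← Nat.div_add_mod k m]
      rw [Nat.add_comm, Function.iterate_add_apply]
      congr 1
      induction k / m with
      | zero => simp
      | succ q ih => rw [Nat.mul_succ, Function.iterate_add_apply, hmx, ih]
    -- the map Fin m → X is surjective, so n ≤ m, so m = n
    have hsurjm : Function.Surjective (fun i : Fin m => f^[(i : ℕ)] x₀) := by
      intro y
      obtain ⟨k, hk⟩ := h x₀ y
      refine ⟨⟨k % m, Nat.mod_lt _ (by omega)⟩, ?_⟩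
      show f^[k % m] x₀ = y
      rw [← hmod, hk]
    have hmn' : n ≤ m := by
      have := Fintype.card_le_of_surjective _ hsurjm
      simpa [hX] using this
    have hmeq : m = n := le_antisymm hmn hmn'
    subst hmeq
    -- build the equivalence
    set g : ZMod m → X := fun k => f^[k.val] x₀ with hg
    have hgs : Function.Surjective g := by
      intro y
      obtain ⟨k, hk⟩ := h x₀ y
      refine ⟨(k : ZMod m), ?_⟩
      rw [hg]
      simp only [ZMod.val_natCast]
      rw [← hmod, hk]
    have hgb : Function.Bijective g := by
      rw [Fintype.bijective_iff_surjective_and_card]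
      exact ⟨hgs, by simp [hX, ZMod.card]⟩
    have hcast : ∀ k : ℕ, g (k : ZMod m) = f^[k] x₀ := by
      intro k
      rw [hg]
      simp only [ZMod.val_natCast]
      rw [← hmod]
    refine ⟨Equiv.ofBijective g hgb, ?_⟩
    intro k
    simp only [Equiv.ofBijective_apply]
    have h1 : g k = f^[k.val] x₀ := rfl
    rw [h1, ← Function.iterate_succ_apply' f k.val x₀, ← hcast (k.val + 1)]
    congr 1
    push_cast
    rw [ZMod.natCast_val, ZMod.cast_id]
end

section
/- Let n be a natural number, let d be the orientation of the complete graph on Fin n defined by d S := S.max' (the maximum element of S), and let τ := Equiv.swap i j for i, j : Fin n with i ≠ j. Then m d (D τ d) is odd, where D τ d is the orientation defined by (D τ d) S := τ (d (S.image τ)). -/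
/-- An orientation of the complete graph on `X` assigns to each 2-element subset of `X`
one of its elements. -/
def GraphOrientation (X : Type*) [DecidableEq X] : Type _ :=
  (S : {S : Finset X // S.card = 2}) → {x : X // x ∈ S.val}

/-- The number `m u v` of relative inversions of two orientations: the number of 2-element
subsets on which they differ. -/
noncomputable def m {X : Type*} [Fintype X] [DecidableEq X] (u v : GraphOrientation X) : ℕ :=
  Nat.card {S : {S : Finset X // S.card = 2} // u S ≠ v S}

/-- The canonical orientation `d` of the complete graph on `Fin n`, assigning to each
2-element subset its maximum. -/
def d (n : ℕ) : GraphOrientation (Fin n) :=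
  fun S =>
    ⟨S.val.max' (Finset.card_pos.mp (by rw [S.prop]; norm_num)), S.val.max'_mem _⟩

/-- The action of a permutation `e` of `Fin n` on orientations of the complete graph,
`(D e u) S := e (u (S.image e⁻¹))`. -/
def D {n : ℕ} (e : Equiv.Perm (Fin n)) (u : GraphOrientation (Fin n)) :
    GraphOrientation (Fin n) :=
  fun S =>
    let T : {S : Finset (Fin n) // S.card = 2} :=
      ⟨S.val.image ⇑e⁻¹, by
        rw [Finset.card_image_of_injective _ (Equiv.injective _)]
        exact S.prop⟩
    ⟨e (u T), by
      obtain ⟨a, ha, hay⟩ := Finset.mem_image.mp (u T).prop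
      rw [← hay]
      simpa using ha⟩

/-!
On a pair `{a, b}` with `b < a`, `d` picks `a`, while `D e d` picks `a` exactly when
`e⁻¹ b < e⁻¹ a`. Hence `m d (D e d)` is the number of inversions of `e⁻¹`, so
`(-1) ^ m d (D e d)` is the sign of `e⁻¹`, i.e. of `e`; a transposition is odd.
-/

open Finset Equiv Equiv.Perm

lemma Finset.max'_pair_of_lt {α : Type*} [LinearOrder α] {a b : α} (h : b < a)
    (H : ({a, b} : Finset α).Nonempty) : ({a, b} : Finset α).max' H = a := by
  simp [h.le]

lemma Finset.exists_pair_of_card_eq_two {α : Type*} [LinearOrder α] {s : Finset α}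
    (hs : #s = 2) : ∃ a b, b < a ∧ s = {a, b} := by
  obtain ⟨x, y, hxy, rfl⟩ := card_eq_two.1 hs
  rcases hxy.lt_or_gt with h | h
  · exact ⟨y, x, h, pair_comm x y⟩
  · exact ⟨x, y, h, rfl⟩

lemma Finset.eq_and_eq_of_pair_eq_pair {α : Type*} [LinearOrder α] {a b c e : α}
    (hba : b < a) (hec : e < c) (h : ({a, b} : Finset α) = {c, e}) : a = c ∧ b = e := by
  rw [← coe_inj, coe_pair, coe_pair, Set.pair_eq_pair_iff] at h
  rcases h with h | ⟨rfl, rfl⟩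
  · exact h
  · exact absurd (hba.trans hec) (lt_irrefl _)

namespace GraphOrientation

variable {n : ℕ}

lemma coe_d_of_eq_pair {S : {S : Finset (Fin n) // #S = 2}} {a b : Fin n}
    (hS : S.val = {a, b}) (hba : b < a) : (d n S : Fin n) = a := by
  obtain ⟨S, hcard⟩ := S
  dsimp only at hS
  subst hS
  exact max'_pair_of_lt hba ⟨a, mem_insert_self a {b}⟩

lemma d_ne_D_iff {S : {S : Finset (Fin n) // #S = 2}} {a b : Fin n} (e : Perm (Fin n))
    (hS : S.val = {a, b}) (hba : b < a) : d n S ≠ D e (d n) S ↔ e⁻¹ a ≤ e⁻¹ b := by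
  set T : {S : Finset (Fin n) // #S = 2} :=
    ⟨S.val.image ⇑e⁻¹, by rw [card_image_of_injective _ (Equiv.injective _), S.prop]⟩
  have hD : (D e (d n) S : Fin n) = e (d n T) := rfl
  have hT : T.val = {e⁻¹ a, e⁻¹ b} := by simp [T, hS]
  rw [Ne, Subtype.ext_iff, coe_d_of_eq_pair hS hba, hD]
  rcases (e⁻¹.injective.ne hba.ne').lt_or_gt with hlt | hlt
  · rw [coe_d_of_eq_pair (hT.trans (pair_comm _ _)) hlt]
    simpa [hba.ne'] using hlt.le
  · rw [coe_d_of_eq_pair hT hlt]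
    simpa using hlt

lemma m_d_D_eq_card (e : Perm (Fin n)) :
    m (d n) (D e (d n)) = #{x ∈ finPairsLT n | e⁻¹ x.1 ≤ e⁻¹ x.2} := by
  classical
  rw [m, Nat.card_eq_fintype_card, Fintype.card_subtype]
  symm
  refine card_bij
    (fun x hx ↦ ⟨{x.1, x.2}, card_pair (mem_finPairsLT.1 (mem_filter.1 hx).1).ne'⟩) ?_ ?_ ?_
  · intro x hx
    obtain ⟨hlt, hinv⟩ := mem_filter.1 hx
    exact mem_filter.2 ⟨mem_univ _, (d_ne_D_iff e rfl (mem_finPairsLT.1 hlt)).2 hinv⟩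
  · intro x hx y hy hxy
    obtain ⟨h₁, h₂⟩ := eq_and_eq_of_pair_eq_pair (mem_finPairsLT.1 (mem_filter.1 hx).1)
      (mem_finPairsLT.1 (mem_filter.1 hy).1) (Subtype.ext_iff.1 hxy)
    exact Sigma.ext h₁ (heq_of_eq h₂)
  · intro S hS
    obtain ⟨a, b, hba, hab⟩ := exists_pair_of_card_eq_two S.prop
    have hinv : e⁻¹ a ≤ e⁻¹ b := (d_ne_D_iff e hab hba).1 (mem_filter.1 hS).2
    exact ⟨⟨a, b⟩, mem_filter.2 ⟨mem_finPairsLT.2 hba, hinv⟩, Subtype.ext hab.symm⟩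

theorem neg_one_pow_m_d_D (e : Perm (Fin n)) : (-1 : ℤˣ) ^ m (d n) (D e (d n)) = signAux e := by
  rw [m_d_D_eq_card, ← signAux_inv e, signAux, prod_ite, prod_const, prod_const, one_pow, mul_one]

end GraphOrientation

/-- For a transposition `τ = swap i j` on `Fin n`, the number of relative inversions
between the canonical orientation `d` and `D τ d` is odd (note `τ⁻¹ = τ`, so
`(D τ d) S = τ (d (S.image τ))`). -/
theorem stmt_14 (n : ℕ) (i j : Fin n) (hij : i ≠ j) :
    Odd (m (d n) (D (Equiv.swap i j) (d n))) := by
  have h := GraphOrientation.neg_one_pow_m_d_D (swap i j)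
  rw [signAux_swap hij] at h
  exact (neg_one_pow_eq_neg_one_iff_odd (by decide)).1 h
end

section
/- Let n ≥ 2 and consider the setoid on orientations of the complete graph on Fin n whose relation is R u v := Even (m u v). Then the quotient by this setoid has exactly two elements, i.e. its cardinality is 2. -/
/-!
An orientation is a point of a product of two-element sets, and `m` is the Hamming distance.
Identifying every factor with `ZMod 2`, a point `x` gets the parity `∑ i, x i`, and the Hamming
distance of `x` and `y` is congruent to `∑ i, (x i + y i)` modulo 2, since two elements of
`ZMod 2` differ exactly when their sum is `1`. Hence `Even (m u v)` says that `u` and `v` have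
the same parity, and the quotient is identified with `ZMod 2`: the parity is surjective as soon
as there is a coordinate to flip.
-/

open Finset

lemma ite_ne_eq_add {α : Type*} [DecidableEq α] (e : α ≃ ZMod 2) (a b : α) :
    (if a ≠ b then 1 else 0 : ZMod 2) = e a + e b := by
  have key : ∀ p q : ZMod 2, (if p ≠ q then 1 else 0 : ZMod 2) = p + q := by decide
  simpa only [e.injective.ne_iff] using key (e a) (e b)

section HammingParity

variable {ι : Type*} [Fintype ι] {β : ι → Type*}

def hammingParity (e : ∀ i, β i ≃ ZMod 2) (x : ∀ i, β i) : ZMod 2 :=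
  ∑ i, e i (x i)

variable (e : ∀ i, β i ≃ ZMod 2)

theorem hammingParity_surjective [Nonempty ι] : Function.Surjective (hammingParity e) := by
  classical
  let i₀ : ι := Classical.arbitrary ι
  intro c
  refine ⟨fun i => (e i).symm (if i = i₀ then c else 0), ?_⟩
  simp [hammingParity]

variable [∀ i, DecidableEq (β i)]

theorem hammingDist_cast_zmod_two (x y : ∀ i, β i) :
    (hammingDist x y : ZMod 2) = hammingParity e x + hammingParity e y := by
  rw [hammingDist, card_filter, Nat.cast_sum, hammingParity, hammingParity, ← sum_add_distrib]
  refine sum_congr rfl fun i _ => ?_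
  rw [← ite_ne_eq_add (e i)]
  split_ifs <;> simp

theorem even_hammingDist_iff (x y : ∀ i, β i) :
    Even (hammingDist x y) ↔ hammingParity e x = hammingParity e y := by
  rw [← ZMod.natCast_eq_zero_iff_even, hammingDist_cast_zmod_two, add_eq_zero_iff_eq_neg,
    ZMod.neg_eq_self_mod_two]

theorem card_quot_even_hammingDist [Nonempty ι] (hβ : ∀ i, Nat.card (β i) = 2) :
    Nat.card (Quot fun x y : ∀ i, β i => Even (hammingDist x y)) = 2 := by
  have e : ∀ i, β i ≃ ZMod 2 := fun i =>
    haveI := Nat.finite_of_card_ne_zero (by rw [hβ i]; norm_num)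
    Finite.equivFinOfCardEq (hβ i)
  have hr : (fun x y : ∀ i, β i => Even (hammingDist x y)) = Setoid.ker (hammingParity e) := by
    ext x y
    rw [even_hammingDist_iff e, Setoid.ker_def]
  rw [hr]
  exact (Nat.card_congr (Setoid.quotientKerEquivOfSurjective _ (hammingParity_surjective e))).trans
    (Nat.card_zmod 2)

end HammingParity

theorem m_eq_hammingDist {X : Type*} [Fintype X] [DecidableEq X] (u v : GraphOrientation X) :
    m u v = hammingDist (β := fun S : {S : Finset X // S.card = 2} => S.val) u v :=
  (Nat.card_congr (Equiv.subtypeEquivRight fun S => by simp)).trans (Nat.card_eq_finsetCard _)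

/-- For `n ≥ 2`, the quotient of the orientations of the complete graph on `Fin n` by the
equivalence relation `R u v := Even (m u v)` has exactly two elements. -/
theorem stmt_15 (n : ℕ) (hn : 2 ≤ n) :
    Nat.card (Quot (fun u v : GraphOrientation (Fin n) => Even (m u v))) = 2 := by
  have : Nonempty {S : Finset (Fin n) // S.card = 2} := by
    obtain ⟨S, -, hS⟩ := exists_subset_card_eq (s := (univ : Finset (Fin n))) (n := 2)
      (by simpa using hn)
    exact ⟨⟨S, hS⟩⟩
  simp_rw [m_eq_hammingDist]
  exact card_quot_even_hammingDist fun S => by simp [S.2]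
end

section
/- Let n be a natural number, let d be the orientation of the complete graph on Fin n defined by d S := S.max' (the maximum element of S), and let e be any permutation of Fin n. Then m d (D e d) is even if and only if Equiv.Perm.sign e = 1, where D e d is the orientation defined by (D e d) S := e (d (S.image e⁻¹)). -/
/-! Under `S ↦ (max S, min S)`, 2-subsets of `Fin n` correspond to pairs `b < a`, and `d`, `D e d`
disagree on `{a, b}` exactly when `e⁻¹` reverses the pair. So `m (d n) (D e (d n))` counts the
inversions of `e⁻¹`, whose parity is `signAux e⁻¹ = sign e⁻¹ = sign e`. -/

open Finset Equiv

def twoSubsetEquiv (X : Type*) [LinearOrder X] :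
    {S : Finset X // #S = 2} ≃ {p : X × X // p.2 < p.1} where
  toFun S :=
    have hS : 1 < #S.1 := by rw [S.2]; norm_num
    ⟨(S.1.max' (card_pos.mp (zero_lt_one.trans hS)), S.1.min' (card_pos.mp (zero_lt_one.trans hS))),
      min'_lt_max'_of_card _ hS⟩
  invFun p := ⟨{p.1.1, p.1.2}, card_pair p.2.ne'⟩
  left_inv := by
    rintro ⟨S, hS⟩
    obtain ⟨a, b, hab, rfl⟩ := card_eq_two.mp hS
    ext
    rcases le_total a b with h | h <;> simp [h, pair_comm]
  right_inv := by
    rintro ⟨⟨a, b⟩, hba⟩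
    ext <;> simp [hba.le]

namespace Equiv.Perm

variable {n : ℕ}

theorem sign_eq_signAux (σ : Perm (Fin n)) : sign σ = signAux σ :=
  σ.swap_induction_on (by simp) fun π i j hij h => by
    rw [signAux_mul, sign_mul, h, sign_swap hij, signAux_swap hij]

theorem signAux_eq_neg_one_pow (σ : Perm (Fin n)) :
    signAux σ = (-1) ^ #{x ∈ finPairsLT n | σ x.1 ≤ σ x.2} := by
  rw [signAux, prod_ite, prod_const, prod_const_one, mul_one]

end Equiv.Perm

theorem d_ne_D_iff {n : ℕ} (e : Perm (Fin n)) (S : {S : Finset (Fin n) // #S = 2}) :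
    d n S ≠ D e (d n) S ↔
      e⁻¹ (twoSubsetEquiv _ S).1.1 ≤ e⁻¹ (twoSubsetEquiv _ S).1.2 := by
  rw [← (twoSubsetEquiv _).symm_apply_apply S, apply_symm_apply]
  rcases twoSubsetEquiv _ S with ⟨⟨a, b⟩, hba⟩
  have hne := (e⁻¹).injective.ne hba.ne'
  rw [Ne, ← Subtype.coe_inj]
  simp only [d, D, twoSubsetEquiv, coe_fn_symm_mk, max'_pair, max_eq_left hba.le,
    image_insert, image_singleton]
  rw [← Perm.inv_eq_iff_eq, eq_comm, max_eq_left_iff, not_le]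
  exact hne.le_iff_lt.symm

theorem m_d_D_eq {n : ℕ} (e : Perm (Fin n)) :
    m (d n) (D e (d n)) = #{x ∈ Perm.finPairsLT n | e⁻¹ x.1 ≤ e⁻¹ x.2} :=
  calc m (d n) (D e (d n))
      = Nat.card {p : {p : Fin n × Fin n // p.2 < p.1} // e⁻¹ p.1.1 ≤ e⁻¹ p.1.2} :=
        Nat.card_congr ((twoSubsetEquiv _).subtypeEquiv (d_ne_D_iff e))
    _ = #{p : Fin n × Fin n | p.2 < p.1 ∧ e⁻¹ p.1 ≤ e⁻¹ p.2} := by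
        rw [Nat.card_congr (subtypeSubtypeEquivSubtypeInter (fun p : Fin n × Fin n => p.2 < p.1)
          fun p => e⁻¹ p.1 ≤ e⁻¹ p.2), Nat.card_eq_fintype_card, Fintype.card_subtype]
    _ = #{x ∈ Perm.finPairsLT n | e⁻¹ x.1 ≤ e⁻¹ x.2} :=
        card_equiv (sigmaEquivProd _ _).symm (by simp [Perm.mem_finPairsLT])

/-- For any permutation `e` of `Fin n`, the number of relative inversions between the
canonical orientation `d` and `D e d` is even if and only if `sign e = 1`. This is the
group-level content of the fact that the Cartier map deloops the sign homomorphism. -/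
theorem stmt_16 (n : ℕ) (e : Equiv.Perm (Fin n)) :
    Even (m (d n) (D e (d n))) ↔ Equiv.Perm.sign e = 1 := by
  rw [m_d_D_eq, ← neg_one_pow_eq_one_iff_even (R := ℤˣ) (by decide),
    ← Perm.signAux_eq_neg_one_pow, ← Perm.sign_eq_signAux, Perm.sign_inv]
end
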